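/- Let (m_n) be a sequence of positive integers and let 0 < ν < 1. Then there exists a sequence (λ_n) of points of the open unit disk 𝔻 such that (λ_n) with multiplicities (m_n) is strongly separated, i.e., inf_n ∏_{k≠n} ρ(λ_n, λ_k)^{m_k} > 0, and ρ(λ_n, λ_{n+1})^{m_{n+1}} = ν for infinitely many n. -/

import Mathlib

open scoped BigOperators
open Metric Finset

noncomputable def blaschke (τ z : ℂ) : ℂ := (τ - z) / (1 - (starRingEnd ℂ) τ * z)

noncomputable def pseudoHyp (z w : ℂ) : ℝ :=
  ‖z - w‖ / ‖1 - (starRingEnd ℂ) z * w‖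

noncomputable def prodExcept (a : ℕ → ℝ) (n : ℕ) : ℝ :=
  ⨅ N : ℕ, ∏ k ∈ (Finset.range N).erase n, a k

def HinfOn (f : ℂ → ℂ) : Prop :=
  DifferentiableOn ℂ f (Metric.ball 0 1) ∧
    ∃ C : ℝ, ∀ z ∈ Metric.ball (0 : ℂ) 1, ‖f z‖ ≤ C

noncomputable def matApply {d : ℕ} (f : ℂ → ℂ) (M : Matrix (Fin d) (Fin d) ℂ) :
    Matrix (Fin d) (Fin d) ℂ :=
  ∑' k : ℕ, (iteratedDeriv k f 0 / (Nat.factorial k : ℂ)) • M ^ k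

noncomputable def matBlaschke {d : ℕ} (M : Matrix (Fin d) (Fin d) ℂ) (z : ℂ) : ℂ :=
  ((minpoly ℂ M).roots.map (fun μ => blaschke μ z)).prod

/-!
Put the points on the radius `[0, 1)` with prescribed consecutive pseudo-hyperbolic distances
`d i`, via Möbius addition `x (i + 1) = (x i + d i) / (1 + x i * d i)`. Along a radius `ρ` is
monotone, so `ρ (x n) (x k) ≥ d j` for every step `j` between `n` and `k`.

On an infinite set `S` of pairwise non-consecutive indices with `m i ≤ m (i + 1)` (such indices
recur because `m` cannot decrease forever) take `d i = ν ^ (1 / m (i + 1))`; elsewhere take `d i`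
so close to `1` that `d i ^ m k ≥ 1 - 2⁻⁽ⁱ⁺⁴⁾` for all `k ≤ i + 2`. In `∏_{k ≠ n} ρ(x n, x k) ^ m k`
the two neighbours of `n` then contribute at least `ν (1 - 2⁻⁽ᵏ⁺²⁾)` each, and every other `k`
sees a step outside `S` among the two steps next to it on the way to `n`, so it contributes at least
`1 - 2⁻⁽ᵏ⁺²⁾`. Hence the product is at least `ν² / 2`.
-/

lemma pseudoHyp_comm (z w : ℂ) : pseudoHyp z w = pseudoHyp w z := by
  unfold pseudoHyp
  rw [norm_sub_rev z w, ← Complex.norm_conj (1 - (starRingEnd ℂ) z * w)]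
  simp [mul_comm]

lemma pseudoHyp_ofReal (x y : ℝ) : pseudoHyp x y = |x - y| / |1 - x * y| := by
  simp only [pseudoHyp, Complex.conj_ofReal, ← Complex.ofReal_mul, ← Complex.ofReal_sub,
    ← Complex.ofReal_one, Complex.norm_real, Real.norm_eq_abs]

lemma pseudoHyp_ofReal_le {a b c d : ℝ} (ha : -1 < a) (hab : a ≤ b) (hbc : b ≤ c) (hcd : c ≤ d)
    (hd : d < 1) : pseudoHyp b c ≤ pseudoHyp a d := by
  have hbc' : 0 < 1 - b * c := by nlinarith
  have hac : 0 < 1 - a * c := by nlinarith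
  have had : 0 < 1 - a * d := by nlinarith
  rw [pseudoHyp_ofReal, pseudoHyp_ofReal, abs_sub_comm b, abs_sub_comm a,
    abs_of_nonneg (by linarith : 0 ≤ c - b), abs_of_nonneg (by linarith : 0 ≤ d - a),
    abs_of_pos hbc', abs_of_pos had]
  calc (c - b) / (1 - b * c) ≤ (c - a) / (1 - a * c) := by
        rw [div_le_div_iff₀ hbc' hac]
        nlinarith [mul_nonneg (sub_nonneg.2 hab) (by nlinarith : (0 : ℝ) ≤ 1 - c * c)]
    _ ≤ (d - a) / (1 - a * d) := by
        rw [div_le_div_iff₀ hac had]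
        nlinarith [mul_nonneg (sub_nonneg.2 hcd) (by nlinarith : (0 : ℝ) ≤ 1 - a * a)]

noncomputable def mobAdd (a t : ℝ) : ℝ := (a + t) / (1 + a * t)

lemma pseudoHyp_mobAdd {a t : ℝ} (ha : |a| < 1) (ht : |t| < 1) :
    pseudoHyp a (mobAdd a t) = |t| := by
  obtain ⟨ha0, ha1⟩ := abs_lt.1 ha
  obtain ⟨ht0, ht1⟩ := abs_lt.1 ht
  have hden : 0 < 1 + a * t := by nlinarith
  have ha2 : 0 < 1 - a * a := by nlinarith
  have hnum : a - mobAdd a t = -t * ((1 - a * a) / (1 + a * t)) := by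
    unfold mobAdd; field_simp; ring
  have hdiv : 1 - a * mobAdd a t = (1 - a * a) / (1 + a * t) := by
    unfold mobAdd; field_simp; ring
  rw [pseudoHyp_ofReal, hnum, hdiv, abs_mul, abs_neg, mul_div_assoc, div_self (by positivity),
    mul_one]

lemma le_mobAdd {a t : ℝ} (ha0 : 0 ≤ a) (ha1 : a < 1) (ht0 : 0 ≤ t) : a ≤ mobAdd a t := by
  unfold mobAdd
  rw [le_div_iff₀ (by positivity)]
  nlinarith [mul_nonneg ht0 (by nlinarith : (0 : ℝ) ≤ 1 - a * a)]

lemma mobAdd_lt_one {a t : ℝ} (ha0 : 0 ≤ a) (ha1 : a < 1) (ht0 : 0 ≤ t) (ht1 : t < 1) :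
    mobAdd a t < 1 := by
  unfold mobAdd
  rw [div_lt_one (by positivity)]
  nlinarith [mul_pos (sub_pos.2 ha1) (sub_pos.2 ht1)]

noncomputable def radialSeq (d : ℕ → ℝ) : ℕ → ℝ
  | 0 => 0
  | n + 1 => mobAdd (radialSeq d n) (d n)

section radialSeq

variable {d : ℕ → ℝ}

lemma radialSeq_mem_Ico (hd : ∀ i, d i ∈ Set.Ico 0 1) (n : ℕ) : radialSeq d n ∈ Set.Ico 0 1 := by
  induction n with
  | zero => simp [radialSeq]
  | succ n ih =>
    exact ⟨ih.1.trans (le_mobAdd ih.1 ih.2 (hd n).1), mobAdd_lt_one ih.1 ih.2 (hd n).1 (hd n).2⟩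

lemma radialSeq_monotone (hd : ∀ i, d i ∈ Set.Ico 0 1) : Monotone (radialSeq d) :=
  monotone_nat_of_le_succ fun n =>
    le_mobAdd (radialSeq_mem_Ico hd n).1 (radialSeq_mem_Ico hd n).2 (hd n).1

lemma pseudoHyp_radialSeq_succ (hd : ∀ i, d i ∈ Set.Ico 0 1) (n : ℕ) :
    pseudoHyp (radialSeq d n) (radialSeq d (n + 1)) = d n := by
  have hx := radialSeq_mem_Ico hd n
  rw [radialSeq, pseudoHyp_mobAdd (abs_lt.2 ⟨by linarith [hx.1], hx.2⟩)
    (abs_lt.2 ⟨by linarith [(hd n).1], (hd n).2⟩), abs_of_nonneg (hd n).1]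

lemma le_pseudoHyp_radialSeq (hd : ∀ i, d i ∈ Set.Ico 0 1) {n k j : ℕ} (hj : min n k ≤ j)
    (hj' : j < max n k) :
    d j ≤ pseudoHyp (radialSeq d n) (radialSeq d k) := by
  wlog hnk : n ≤ k generalizing n k
  · rw [pseudoHyp_comm]
    exact this (by omega) (by omega) (by omega)
  rw [← pseudoHyp_radialSeq_succ hd j]
  have hmono := radialSeq_monotone hd
  exact pseudoHyp_ofReal_le (by linarith [(radialSeq_mem_Ico hd n).1]) (hmono (by omega))
    (hmono (by omega)) (hmono (by omega)) (radialSeq_mem_Ico hd k).2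

end radialSeq

lemma le_rpow_inv_pow {x : ℝ} (hx0 : 0 ≤ x) (hx1 : x ≤ 1) {k c : ℕ} (hkc : k ≤ c) :
    x ≤ (x ^ ((c : ℝ)⁻¹)) ^ k := by
  rcases eq_or_ne c 0 with rfl | hc
  · simpa using hx1
  calc x = (x ^ ((c : ℝ)⁻¹)) ^ c := (Real.rpow_inv_natCast_pow hx0 hc).symm
    _ ≤ (x ^ ((c : ℝ)⁻¹)) ^ k :=
      pow_le_pow_of_le_one (by positivity) (Real.rpow_le_one hx0 hx1 (by positivity)) hkc

lemma frequently_le_succ {α : Type*} [LinearOrder α] [WellFoundedLT α] (f : ℕ → α) :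
    ∃ᶠ n in Filter.atTop, f n ≤ f (n + 1) := by
  rw [Filter.frequently_atTop]
  by_contra! h
  obtain ⟨N, hN⟩ := h
  exact not_strictAnti_of_wellFoundedLT (fun k => f (N + k))
    (strictAnti_nat_of_succ_lt fun k => hN (N + k) (Nat.le_add_right N k))

lemma exists_subset_frequently_not_succ_mem {p : ℕ → Prop} (hp : ∃ᶠ n in Filter.atTop, p n) :
    ∃ S : Set ℕ, (∀ n ∈ S, p n) ∧ (∃ᶠ n in Filter.atTop, n ∈ S) ∧ ∀ n ∈ S, n + 1 ∉ S := by
  have hsplit : ∃ᶠ n in Filter.atTop, (p n ∧ Even n) ∨ (p n ∧ ¬Even n) :=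
    hp.mono fun n hn => by tauto
  rcases Filter.frequently_or_distrib.1 hsplit with hp | hp
  · exact ⟨{n | p n ∧ Even n}, fun n hn => hn.1, hp,
      fun n hn hn' => Nat.even_add_one.1 hn'.2 hn.2⟩
  · exact ⟨{n | p n ∧ ¬Even n}, fun n hn => hn.1, hp,
      fun n hn hn' => hn'.2 (Nat.even_add_one.2 hn.2)⟩

lemma one_sub_sum_le_prod_one_sub {ι : Type*} (T : Finset ι) {ε : ι → ℝ}
    (hε0 : ∀ k ∈ T, 0 ≤ ε k) (hε1 : ∀ k ∈ T, ε k ≤ 1) :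
    1 - ∑ k ∈ T, ε k ≤ ∏ k ∈ T, (1 - ε k) := by
  induction T using Finset.cons_induction with
  | empty => simp
  | cons a T ha ih =>
    simp only [Finset.forall_mem_cons] at hε0 hε1
    rw [Finset.sum_cons, Finset.prod_cons]
    have hsum : 0 ≤ ∑ k ∈ T, ε k := Finset.sum_nonneg hε0.2
    have hprod : 0 ≤ ∏ k ∈ T, (1 - ε k) :=
      Finset.prod_nonneg fun k hk => sub_nonneg.2 (hε1.2 k hk)
    nlinarith [ih hε0.2 hε1.2, hε0.1, hε1.1]

lemma pow_card_mul_one_sub_sum_le_prod {ι : Type*} [DecidableEq ι] (T A : Finset ι)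
    {a ε : ι → ℝ} {ν : ℝ} (hν0 : 0 ≤ ν) (hν1 : ν ≤ 1)
    (hε0 : ∀ k ∈ T, 0 ≤ ε k) (hε1 : ∀ k ∈ T, ε k ≤ 1)
    (hnear : ∀ k ∈ T, ν * (1 - ε k) ≤ a k) (hfar : ∀ k ∈ T, k ∉ A → 1 - ε k ≤ a k) :
    ν ^ #A * (1 - ∑ k ∈ T, ε k) ≤ ∏ k ∈ T, a k := by
  have hfactor : ∀ k ∈ T, (if k ∈ A then ν else 1) * (1 - ε k) ≤ a k := by
    intro k hk
    split_ifs with hkA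
    · exact hnear k hk
    · simpa using hfar k hk hkA
  calc ν ^ #A * (1 - ∑ k ∈ T, ε k)
      ≤ ν ^ #A * ∏ k ∈ T, (1 - ε k) :=
        mul_le_mul_of_nonneg_left (one_sub_sum_le_prod_one_sub T hε0 hε1) (by positivity)
    _ ≤ ν ^ #(T ∩ A) * ∏ k ∈ T, (1 - ε k) :=
        mul_le_mul_of_nonneg_right
          (pow_le_pow_of_le_one hν0 hν1 (Finset.card_le_card Finset.inter_subset_right))
          (Finset.prod_nonneg fun k hk => sub_nonneg.2 (hε1 k hk))
    _ = ∏ k ∈ T, (if k ∈ A then ν else 1) * (1 - ε k) := by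
        rw [Finset.prod_mul_distrib, Finset.prod_ite_mem, Finset.prod_const]
    _ ≤ ∏ k ∈ T, a k := Finset.prod_le_prod (fun k hk => mul_nonneg (by split_ifs <;> simp [hν0])
        (sub_nonneg.2 (hε1 k hk))) hfactor

lemma sum_half_pow_add_two_le (T : Finset ℕ) : ∑ k ∈ T, (1 / 2 : ℝ) ^ (k + 2) ≤ 1 / 2 := by
  have hsummable : Summable fun k : ℕ => (1 / 2 : ℝ) ^ (k + 2) := by
    simpa only [pow_add] using summable_geometric_two.mul_right ((1 / 2 : ℝ) ^ 2)
  calc ∑ k ∈ T, (1 / 2 : ℝ) ^ (k + 2) ≤ ∑' k, (1 / 2 : ℝ) ^ (k + 2) :=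
        hsummable.sum_le_tsum T fun k _ => by positivity
    _ = 1 / 2 := by
        simp only [pow_add, tsum_mul_right, tsum_geometric_two]
        norm_num

open Classical in
noncomputable def separatedStep (m : ℕ → ℕ) (ν : ℝ) (S : Set ℕ) (i : ℕ) : ℝ :=
  if i ∈ S then ν ^ ((m (i + 1) : ℝ)⁻¹)
  else (1 - (1 / 2) ^ (i + 4)) ^ (((∑ j ∈ range (i + 3), m j : ℕ) : ℝ)⁻¹)

section separatedStep

variable {m : ℕ → ℕ} {ν : ℝ} {S : Set ℕ}

lemma separatedStep_mem_Ico (hm : ∀ n, 0 < m n) (hν0 : 0 ≤ ν) (hν1 : ν < 1) (i : ℕ) :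
    separatedStep m ν S i ∈ Set.Ico 0 1 := by
  have hhalf : (0 : ℝ) < (1 / 2) ^ (i + 4) := by positivity
  have hhalf' : (1 / 2 : ℝ) ^ (i + 4) ≤ 1 := pow_le_one₀ (by norm_num) (by norm_num)
  unfold separatedStep
  split_ifs
  · exact ⟨by positivity, Real.rpow_lt_one hν0 hν1 (by simpa using hm _)⟩
  · refine ⟨Real.rpow_nonneg (by linarith) _, Real.rpow_lt_one (by linarith) (by linarith) ?_⟩
    have : 0 < ∑ j ∈ range (i + 3), m j := Finset.sum_pos (fun j _ => hm j) (by simp)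
    positivity

lemma separatedStep_pow_of_mem (hν0 : 0 ≤ ν) {i : ℕ} (hm : 0 < m (i + 1)) (hi : i ∈ S) :
    separatedStep m ν S i ^ m (i + 1) = ν := by
  rw [separatedStep, if_pos hi, Real.rpow_inv_natCast_pow hν0 hm.ne']

lemma le_separatedStep_pow_of_mem (hν0 : 0 ≤ ν) (hν1 : ν ≤ 1) {i k : ℕ} (hi : i ∈ S)
    (hk : m k ≤ m (i + 1)) : ν ≤ separatedStep m ν S i ^ m k := by
  rw [separatedStep, if_pos hi]
  exact le_rpow_inv_pow hν0 hν1 hk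

lemma le_separatedStep_pow_of_notMem {i k : ℕ} (hi : i ∉ S) (hk : k ≤ i + 2) :
    1 - (1 / 2) ^ (i + 4) ≤ separatedStep m ν S i ^ m k := by
  rw [separatedStep, if_neg hi]
  have hhalf : (0 : ℝ) ≤ (1 / 2) ^ (i + 4) := by positivity
  have hhalf' : (1 / 2 : ℝ) ^ (i + 4) ≤ 1 := pow_le_one₀ (by norm_num) (by norm_num)
  exact le_rpow_inv_pow (by linarith) (by linarith)
    (Finset.single_le_sum (f := m) (fun j _ => Nat.zero_le _) (Finset.mem_range.2 (by omega)))

end separatedStep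

section separatedSeq

variable {m : ℕ → ℕ} {ν : ℝ} {S : Set ℕ}

lemma one_sub_le_pseudoHyp_pow_of_far (hm : ∀ n, 0 < m n) (hν0 : 0 ≤ ν) (hν1 : ν < 1)
    (hsparse : ∀ i ∈ S, i + 1 ∉ S) {n k : ℕ} (hnk : k + 2 ≤ n ∨ n + 2 ≤ k) :
    1 - (1 / 2) ^ (k + 2) ≤
      pseudoHyp (radialSeq (separatedStep m ν S) n) (radialSeq (separatedStep m ν S) k) ^ m k := by
  have hd := separatedStep_mem_Ico (S := S) hm hν0 hν1
  have hnotMem (i : ℕ) : ∃ j ∉ S, i ≤ j ∧ j ≤ i + 1 := by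
    by_cases hi : i ∈ S
    · exact ⟨i + 1, hsparse i hi, by omega, le_rfl⟩
    · exact ⟨i, hi, le_rfl, by omega⟩
  obtain ⟨j, hjS, hmin, hmax, hkj⟩ : ∃ j ∉ S, min n k ≤ j ∧ j < max n k ∧ k ≤ j + 2 := by
    rcases hnk with hnk | hnk
    · obtain ⟨j, hjS, hj⟩ := hnotMem k
      exact ⟨j, hjS, by omega⟩
    · obtain ⟨j, hjS, hj⟩ := hnotMem (k - 2)
      exact ⟨j, hjS, by omega⟩
  calc 1 - (1 / 2 : ℝ) ^ (k + 2) ≤ 1 - (1 / 2) ^ (j + 4) := by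
        gcongr 1 - ?_
        exact pow_le_pow_of_le_one (by norm_num) (by norm_num) (by omega)
    _ ≤ separatedStep m ν S j ^ m k := le_separatedStep_pow_of_notMem hjS hkj
    _ ≤ _ := pow_le_pow_left₀ (hd j).1 (le_pseudoHyp_radialSeq hd hmin hmax) _

lemma mul_one_sub_le_pseudoHyp_pow_of_adjacent (hm : ∀ n, 0 < m n) (hν0 : 0 ≤ ν) (hν1 : ν < 1)
    (hS : ∀ i ∈ S, m i ≤ m (i + 1)) {n k : ℕ} (hnk : k = n + 1 ∨ n = k + 1) :
    ν * (1 - (1 / 2) ^ (k + 2)) ≤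
      pseudoHyp (radialSeq (separatedStep m ν S) n) (radialSeq (separatedStep m ν S) k) ^ m k := by
  have hd := separatedStep_mem_Ico (S := S) hm hν0 hν1
  obtain ⟨i, hρ, hki⟩ : ∃ i, pseudoHyp (radialSeq (separatedStep m ν S) n)
      (radialSeq (separatedStep m ν S) k) = separatedStep m ν S i ∧ (k = i ∨ k = i + 1) := by
    rcases hnk with rfl | rfl
    · exact ⟨n, pseudoHyp_radialSeq_succ hd n, Or.inr rfl⟩
    · exact ⟨k, by rw [pseudoHyp_comm, pseudoHyp_radialSeq_succ hd k], Or.inl rfl⟩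
  have hhalf : (0 : ℝ) ≤ (1 / 2) ^ (k + 2) := by positivity
  have hhalf' : (1 / 2 : ℝ) ^ (k + 2) ≤ 1 := pow_le_one₀ (by norm_num) (by norm_num)
  rw [hρ]
  by_cases hi : i ∈ S
  · have hmk : m k ≤ m (i + 1) := by
      rcases hki with rfl | rfl
      exacts [hS k hi, le_rfl]
    calc ν * (1 - (1 / 2) ^ (k + 2)) ≤ ν := mul_le_of_le_one_right hν0 (by linarith)
      _ ≤ _ := le_separatedStep_pow_of_mem hν0 hν1.le hi hmk
  · calc ν * (1 - (1 / 2) ^ (k + 2)) ≤ 1 - (1 / 2) ^ (k + 2) :=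
          mul_le_of_le_one_left (by linarith) hν1.le
      _ ≤ 1 - (1 / 2) ^ (i + 4) := by
          gcongr 1 - ?_
          exact pow_le_pow_of_le_one (by norm_num) (by norm_num) (by omega)
      _ ≤ _ := le_separatedStep_pow_of_notMem hi (by omega)

lemma sq_mul_half_le_prod_pseudoHyp_pow (hm : ∀ n, 0 < m n) (hν0 : 0 ≤ ν) (hν1 : ν < 1)
    (hS : ∀ i ∈ S, m i ≤ m (i + 1)) (hsparse : ∀ i ∈ S, i + 1 ∉ S) (n N : ℕ) :
    ν ^ 2 * (1 / 2) ≤ ∏ k ∈ (range N).erase n,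
      pseudoHyp (radialSeq (separatedStep m ν S) n) (radialSeq (separatedStep m ν S) k) ^ m k := by
  have hfar := fun k => one_sub_le_pseudoHyp_pow_of_far (n := n) (k := k) hm hν0 hν1 hsparse
  have hadj := fun k => mul_one_sub_le_pseudoHyp_pow_of_adjacent (n := n) (k := k) hm hν0 hν1 hS
  calc ν ^ 2 * (1 / 2)
      ≤ ν ^ #{n - 1, n + 1} * (1 - ∑ k ∈ (range N).erase n, (1 / 2) ^ (k + 2)) := by
        gcongr ?_ * ?_
        · exact pow_le_pow_of_le_one hν0 hν1.le (Finset.card_le_two)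
        · linarith [sum_half_pow_add_two_le ((range N).erase n)]
    _ ≤ _ := by
        refine pow_card_mul_one_sub_sum_le_prod _ _ hν0 hν1.le (fun k _ => by positivity)
          (fun k _ => pow_le_one₀ (by norm_num) (by norm_num)) (fun k hk => ?_) (fun k hk hkA => ?_)
        · have hkn := Finset.ne_of_mem_erase hk
          by_cases hnk : k = n + 1 ∨ n = k + 1
          · exact hadj k hnk
          · exact (mul_le_of_le_one_left (sub_nonneg.2 (pow_le_one₀ (by norm_num) (by norm_num)))
              hν1.le).trans (hfar k (by omega))
        · have hkn := Finset.ne_of_mem_erase hk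
          simp only [Finset.mem_insert, Finset.mem_singleton] at hkA
          exact hfar k (by omega)

end separatedSeq

/-- For any multiplicities and any `0 < ν < 1` there is a strongly separated sequence with
`ρ(λ_n, λ_{n+1})^{m_{n+1}} = ν` infinitely often. -/
theorem exists_strongly_separated_with_close_consecutive_points
    (m : ℕ → ℕ) (hm : ∀ n, 0 < m n) (ν : ℝ) (hν0 : 0 < ν) (hν1 : ν < 1) :
    ∃ l : ℕ → ℂ, (∀ n, l n ∈ Metric.ball (0 : ℂ) 1) ∧
      (∃ δ > (0 : ℝ), ∀ n : ℕ,
          δ ≤ prodExcept (fun k => pseudoHyp (l n) (l k) ^ m k) n) ∧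
      (∀ N : ℕ, ∃ n ≥ N, pseudoHyp (l n) (l (n + 1)) ^ m (n + 1) = ν) := by
  obtain ⟨S, hS, hSfreq, hsparse⟩ := exists_subset_frequently_not_succ_mem (frequently_le_succ m)
  have hd := separatedStep_mem_Ico (S := S) hm hν0.le hν1
  refine ⟨fun n => radialSeq (separatedStep m ν S) n, fun n => ?_,
    ⟨ν ^ 2 * (1 / 2), by positivity, fun n => ?_⟩, fun N => ?_⟩
  · have hx := radialSeq_mem_Ico hd n
    rw [mem_ball_zero_iff, Complex.norm_real, Real.norm_eq_abs, abs_of_nonneg hx.1]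
    exact hx.2
  · exact le_ciInf (sq_mul_half_le_prod_pseudoHyp_pow hm hν0.le hν1 hS hsparse n)
  · obtain ⟨n, hnN, hnS⟩ := Filter.frequently_atTop.1 hSfreq N
    exact ⟨n, hnN, by rw [pseudoHyp_radialSeq_succ hd, separatedStep_pow_of_mem hν0.le (hm _) hnS]⟩
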